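/- For any finite simple connected graph G with n vertices, m edges, maximum degree Δ, the sigma index satisfies σ(G) ≥ (irr(G))²/m and σ(G) ≤ (Δ-1)·irr(G), where irr is the Albertson index; hence irr(G)²/m ≤ σ(G) ≤ (Δ-1)·irr(G). -/
import Mathlib


open Finset

variable {V : Type*} [Fintype V] [DecidableEq V]

/-- The sigma index of a graph: `∑_{uv ∈ E(G)} (d(u) - d(v))²`. -/
def sigmaIndex (G : SimpleGraph V) [DecidableRel G.Adj] : ℤ :=
  ∑ e ∈ G.edgeFinset,
    Sym2.lift ⟨fun u v => ((G.degree u : ℤ) - G.degree v) ^ 2, fun u v => by ring⟩ e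

/-- The Albertson irregularity index of a graph: `∑_{uv ∈ E(G)} |d(u) - d(v)|`. -/
def albertsonIndex (G : SimpleGraph V) [DecidableRel G.Adj] : ℤ :=
  ∑ e ∈ G.edgeFinset,
    Sym2.lift ⟨fun u v => |(G.degree u : ℤ) - G.degree v|, fun u v => by
      simp only []; exact abs_sub_comm _ _⟩ e

/-- For a connected graph with `m ≥ 1` edges, minimum degree at least `1` and maximum
degree `Δ`, the sigma index satisfies
`irr(G)²/m ≤ σ(G) ≤ (Δ - 1)·irr(G)`. -/
theorem albertson_sigma_sandwich (G : SimpleGraph V) [DecidableRel G.Adj]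
    (hconn : G.Connected) (hm : 1 ≤ G.edgeFinset.card) (hδ : ∀ v : V, 1 ≤ G.degree v) :
    ((albertsonIndex G : ℝ)) ^ 2 / (G.edgeFinset.card : ℝ) ≤ (sigmaIndex G : ℝ) ∧
      (sigmaIndex G : ℝ) ≤ ((G.maxDegree : ℝ) - 1) * (albertsonIndex G : ℝ) := by
  have hmpos : (0 : ℝ) < G.edgeFinset.card := by exact_mod_cast hm
  constructor
  · rw [div_le_iff₀ hmpos]
    have key : (albertsonIndex G) ^ 2 ≤ G.edgeFinset.card * sigmaIndex G := by
      have h := sq_sum_le_card_mul_sum_sq (s := G.edgeFinset)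
        (f := fun e => Sym2.lift ⟨fun u v => |(G.degree u : ℤ) - G.degree v|, fun u v => by
          simp only []; exact abs_sub_comm _ _⟩ e)
      refine h.trans_eq ?_
      unfold sigmaIndex
      congr 1
      refine Finset.sum_congr rfl fun e _ => ?_
      induction e using Sym2.ind with
      | _ u v => simp [sq_abs]
    calc (albertsonIndex G : ℝ) ^ 2 = ((albertsonIndex G ^ 2 : ℤ) : ℝ) := by push_cast; ring
      _ ≤ ((G.edgeFinset.card * sigmaIndex G : ℤ) : ℝ) := by exact_mod_cast key
      _ = (sigmaIndex G : ℝ) * G.edgeFinset.card := by push_cast; ring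
  · have hΔ1 : 1 ≤ G.maxDegree := by
      obtain ⟨v⟩ := hconn.nonempty
      exact le_trans (hδ v) (G.degree_le_maxDegree v)
    have key : sigmaIndex G ≤ ((G.maxDegree : ℤ) - 1) * albertsonIndex G := by
      unfold sigmaIndex albertsonIndex
      rw [Finset.mul_sum]
      refine Finset.sum_le_sum fun e he => ?_
      induction e using Sym2.ind with
      | _ u v =>
        simp only [Sym2.lift_mk]
        have habs : |(G.degree u : ℤ) - G.degree v| ≤ (G.maxDegree : ℤ) - 1 := by
          have h1 : (G.degree u : ℤ) ≤ G.maxDegree := by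
            exact_mod_cast G.degree_le_maxDegree u
          have h2 : (G.degree v : ℤ) ≤ G.maxDegree := by
            exact_mod_cast G.degree_le_maxDegree v
          have h3 : (1 : ℤ) ≤ G.degree u := by exact_mod_cast hδ u
          have h4 : (1 : ℤ) ≤ G.degree v := by exact_mod_cast hδ v
          rw [abs_le]; omega
        calc ((G.degree u : ℤ) - G.degree v) ^ 2
            = |(G.degree u : ℤ) - G.degree v| * |(G.degree u : ℤ) - G.degree v| := by
              rw [← abs_mul, ← sq, abs_of_nonneg (sq_nonneg _)]
          _ ≤ ((G.maxDegree : ℤ) - 1) * |(G.degree u : ℤ) - G.degree v| :=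
              mul_le_mul_of_nonneg_right habs (abs_nonneg _)
    calc (sigmaIndex G : ℝ) ≤ (((G.maxDegree : ℤ) - 1) * albertsonIndex G : ℤ) := by
          exact_mod_cast key
      _ = ((G.maxDegree : ℝ) - 1) * albertsonIndex G := by push_cast; ring
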